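/- There exists a constant c₁ > 0 depending only on β such that for all integers n ≥ ℓ ≥ n₀ and all t > 0, one has |Ψ_n^{(ℓ)}(t)| ≤ c₁ · e^{−γ(2^ℓ)t/4}. -/

import Mathlib

open Filter Topology Asymptotics MeasureTheory

noncomputable section

/-- The hypotheses on the fragmentation coefficient `γ` in the region `n ≥ n₀`:
monotonicity along powers of two and two-sided power-law bounds of exponent `β`. -/
def GammaHyp (β : ℝ) (γ : ℝ → ℝ) (n₀ : ℕ) : Prop :=
  (∀ ξ : ℝ, 0 < ξ → 0 < γ ξ) ∧
  (∀ n : ℤ, (n₀:ℤ) ≤ n → γ ((2:ℝ) ^ n) < γ ((2:ℝ) ^ (n + 1))) ∧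
  ∀ n m : ℤ, (n₀:ℤ) ≤ n → (n₀:ℤ) ≤ m →
    1 / 2 * (2:ℝ) ^ (β * ((n:ℝ) - (m:ℝ))) ≤ γ ((2:ℝ) ^ n) / γ ((2:ℝ) ^ m) ∧
      γ ((2:ℝ) ^ n) / γ ((2:ℝ) ^ m) ≤ 3 / 2 * (2:ℝ) ^ (β * ((n:ℝ) - (m:ℝ)))

/-- The fundamental solution
`Ψ_n^{(ℓ)}(t) = Σ_{k=ℓ}^n (γ(2^k)/γ(2^ℓ)) ∏_{j=ℓ, j≠k}^n (1 − γ(2^k)/γ(2^j))⁻¹ e^{−γ(2^k)t/4}`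
for `n ≥ ℓ`, and `Ψ_n^{(ℓ)}(t) = 0` for `n < ℓ`. -/
def Psi (γ : ℝ → ℝ) (l n : ℤ) (t : ℝ) : ℝ :=
  if l ≤ n then
    ∑ c ∈ Finset.Icc l n,
      γ ((2:ℝ) ^ c) / γ ((2:ℝ) ^ l) *
        (∏ j ∈ (Finset.Icc l n).erase c, (1 - γ ((2:ℝ) ^ c) / γ ((2:ℝ) ^ j))⁻¹) *
        Real.exp (-(γ ((2:ℝ) ^ c) * t / 4))
  else 0

/-!
Write `g_k = γ(2^k)` and `a = 2^β > 2`. In the `k`-th term of `Ψ_n^{(ℓ)}`, the factors with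
`j < k` satisfy `g_k/g_j ≥ a^{k-j}/2 > 1`, so together with the prefactor
`g_k/g_ℓ ≤ (3/2) a^{k-ℓ}` they are bounded by `psiWeight a (k-ℓ)`, whose successive ratios
`a / (a^{m+1}/2 - 1)` tend to `0`, so that these weights are summable. The factors with `j > k` satisfy
`g_k/g_j ≤ (3/2) 2^{k-j} ≤ 3/4`, and `(1-x)⁻¹ ≤ e^{4x}` bounds their product by
`exp (6 Σ_{d ≥ 1} 2^{-d}) = e⁶`. Finally `g_k ≥ g_ℓ` gives `e^{-g_k t/4} ≤ e^{-g_ℓ t/4}`,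
so `c₁ = e⁶ Σ_m psiWeight a m` works.
-/

open Finset Real

/-- `Ψ_{ℓ+N}^{(ℓ)}` written in terms of `G i = γ(2^{ℓ+i})`. -/
def psiSum (G : ℕ → ℝ) (N : ℕ) (t : ℝ) : ℝ :=
  ∑ i ∈ range (N + 1),
    G i / G 0 * (∏ j ∈ (range (N + 1)).erase i, (1 - G i / G j)⁻¹) * exp (-(G i * t / 4))

def psiWeight (a : ℝ) (m : ℕ) : ℝ :=
  3 / 2 * ∏ d ∈ range m, a / (1 / 2 * a ^ (d + 1) - 1)

/-- The power-law bounds of `GammaHyp`, for a sequence indexed from `0`. -/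
def PowerRatioBounds (β : ℝ) (G : ℕ → ℝ) : Prop :=
  ∀ i j : ℕ, 1 / 2 * (2:ℝ) ^ (β * ((i:ℝ) - j)) ≤ G i / G j ∧
    G i / G j ≤ 3 / 2 * (2:ℝ) ^ (β * ((i:ℝ) - j))

theorem one_lt_half_mul_pow {a : ℝ} (ha : 2 < a) {n : ℕ} (hn : n ≠ 0) : 1 < 1 / 2 * a ^ n := by
  have := le_self_pow₀ (by linarith : 1 ≤ a) hn
  linarith

theorem two_lt_two_rpow {β : ℝ} (hβ : 1 < β) : 2 < (2:ℝ) ^ β := by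
  simpa using Real.rpow_lt_rpow_of_exponent_lt (by norm_num : (1:ℝ) < 2) hβ

theorem inv_one_sub_le_exp {x : ℝ} (hx₀ : 0 ≤ x) (hx : x ≤ 3 / 4) : (1 - x)⁻¹ ≤ exp (4 * x) := by
  have hle : (1 - x)⁻¹ ≤ 1 + 4 * x := by
    rw [inv_le_iff_one_le_mul₀ (by linarith)]
    nlinarith
  linarith [add_one_le_exp (4 * x)]

theorem prod_inv_one_sub_le_exp_sum {ι : Type*} (s : Finset ι) (x : ι → ℝ)
    (hx : ∀ j ∈ s, 0 ≤ x j ∧ x j ≤ 3 / 4) :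
    ∏ j ∈ s, (1 - x j)⁻¹ ≤ exp (4 * ∑ j ∈ s, x j) := by
  rw [mul_sum, exp_sum]
  exact prod_le_prod (fun j hj => inv_nonneg.2 (by linarith [hx j hj]))
    fun j hj => inv_one_sub_le_exp (hx j hj).1 (hx j hj).2

theorem sum_Ico_half_pow_sub_le_one (i N : ℕ) :
    ∑ j ∈ Ico (i + 1) (N + 1), (1 / 2 : ℝ) ^ (j - i) ≤ 1 := by
  rw [sum_Ico_eq_sum_range]
  calc ∑ k ∈ range (N + 1 - (i + 1)), (1 / 2 : ℝ) ^ (i + 1 + k - i)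
      = 1 / 2 * ∑ k ∈ range (N + 1 - (i + 1)), (1 / 2 : ℝ) ^ k := by
        rw [mul_sum]
        refine sum_congr rfl fun k _ => ?_
        rw [show i + 1 + k - i = k + 1 by omega, pow_succ']
    _ ≤ 1 := by linarith [sum_geometric_two_le (N + 1 - (i + 1))]

theorem range_succ_erase {N i : ℕ} (hi : i ≤ N) :
    (range (N + 1)).erase i = range i ∪ Ico (i + 1) (N + 1) := by
  ext j
  simp only [mem_erase, mem_range, mem_union, mem_Ico]
  omega

section psiWeight

variable {a : ℝ}

theorem psiWeight_succ (m : ℕ) :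
    psiWeight a (m + 1) = psiWeight a m * (a / (1 / 2 * a ^ (m + 1) - 1)) := by
  rw [psiWeight, psiWeight, prod_range_succ, mul_assoc]

theorem psiWeight_nonneg (ha : 2 < a) (m : ℕ) : 0 ≤ psiWeight a m := by
  refine mul_nonneg (by norm_num) (prod_nonneg fun d _ => div_nonneg (by linarith) ?_)
  linarith [one_lt_half_mul_pow ha (n := d + 1) d.succ_ne_zero]

theorem summable_psiWeight (ha : 2 < a) : Summable (psiWeight a) := by
  refine summable_of_ratio_norm_eventually_le (by norm_num : (1 / 2 : ℝ) < 1) ?_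
  filter_upwards [(tendsto_pow_atTop_atTop_of_one_lt (by linarith : 1 < a)).eventually_ge_atTop
    (4 * a + 2)] with m hm
  have hpow : a ^ m ≤ a ^ (m + 1) := pow_le_pow_right₀ (by linarith) m.le_succ
  have hratio : a / (1 / 2 * a ^ (m + 1) - 1) ≤ 1 / 2 := by
    rw [div_le_iff₀ (by linarith)]
    linarith
  rw [Real.norm_of_nonneg (psiWeight_nonneg ha _), Real.norm_of_nonneg (psiWeight_nonneg ha _),
    psiWeight_succ]
  exact (mul_le_mul_of_nonneg_left hratio (psiWeight_nonneg ha m)).trans_eq (mul_comm _ _)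

theorem tsum_psiWeight_pos (ha : 2 < a) : 0 < ∑' m, psiWeight a m :=
  (summable_psiWeight ha).tsum_pos (psiWeight_nonneg ha) 0 (by norm_num [psiWeight])

end psiWeight

namespace PowerRatioBounds

variable {β : ℝ} {G : ℕ → ℝ}

theorem lower (h : PowerRatioBounds β G) {i j : ℕ} (hji : j ≤ i) :
    1 / 2 * ((2:ℝ) ^ β) ^ (i - j) ≤ G i / G j := by
  simpa only [← Nat.cast_sub hji, Real.rpow_mul_natCast zero_le_two] using (h i j).1

theorem upper (h : PowerRatioBounds β G) {i j : ℕ} (hji : j ≤ i) :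
    G i / G j ≤ 3 / 2 * ((2:ℝ) ^ β) ^ (i - j) := by
  simpa only [← Nat.cast_sub hji, Real.rpow_mul_natCast zero_le_two] using (h i j).2

theorem upper_of_lt (h : PowerRatioBounds β G) (hβ : 1 ≤ β) {i j : ℕ} (hij : i < j) :
    G i / G j ≤ 3 / 2 * (1 / 2) ^ (j - i) := by
  have hexp : β * ((i:ℝ) - j) ≤ (i:ℝ) - j := by
    have : (i:ℝ) < j := by exact_mod_cast hij
    nlinarith
  have hhalf : (2:ℝ) ^ ((i:ℝ) - j) = (1 / 2) ^ (j - i) := by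
    rw [show (i:ℝ) - j = -((j - i : ℕ) : ℝ) by push_cast [hij.le]; ring,
      Real.rpow_neg zero_le_two, Real.rpow_natCast, one_div, inv_pow]
  calc G i / G j ≤ 3 / 2 * (2:ℝ) ^ (β * ((i:ℝ) - j)) := (h i j).2
    _ ≤ 3 / 2 * (1 / 2) ^ (j - i) := by
      rw [← hhalf]
      gcongr
      norm_num

theorem monotone (h : PowerRatioBounds β G) (hβ : 1 < β) (hG : ∀ i, 0 < G i) : Monotone G := by
  intro j i hji
  rcases hji.eq_or_lt with rfl | hlt
  · exact le_rfl
  · have := one_lt_half_mul_pow (two_lt_two_rpow hβ) (Nat.sub_ne_zero_of_lt hlt)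
    rw [← one_le_div (hG j)]
    linarith [h.lower hlt.le]

theorem prod_lower_le (h : PowerRatioBounds β G) (hβ : 1 < β) (i : ℕ) :
    ∏ j ∈ range i, |1 - G i / G j|⁻¹ ≤
      ∏ d ∈ range i, (1 / 2 * ((2:ℝ) ^ β) ^ (d + 1) - 1)⁻¹ := by
  rw [← prod_range_reflect (fun d => (1 / 2 * ((2:ℝ) ^ β) ^ (d + 1) - 1)⁻¹) i]
  refine prod_le_prod (fun j _ => by positivity) fun j hj => ?_
  have hji : j < i := mem_range.1 hj
  rw [show i - 1 - j + 1 = i - j by omega]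
  have hpos := one_lt_half_mul_pow (two_lt_two_rpow hβ) (Nat.sub_ne_zero_of_lt hji)
  have hlow := h.lower hji.le
  rw [abs_sub_comm, abs_of_pos (by linarith)]
  exact inv_anti₀ (by linarith) (by linarith)

theorem prod_upper_le (h : PowerRatioBounds β G) (hβ : 1 ≤ β) (hG : ∀ i, 0 < G i) (i N : ℕ) :
    ∏ j ∈ Ico (i + 1) (N + 1), |1 - G i / G j|⁻¹ ≤ exp 6 := by
  have hbound : ∀ j ∈ Ico (i + 1) (N + 1), 0 ≤ G i / G j ∧ G i / G j ≤ 3 / 4 := by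
    intro j hj
    have hij : i < j := by simp only [mem_Ico] at hj; omega
    have hhalf : (1 / 2 : ℝ) ^ (j - i) ≤ 1 / 2 :=
      pow_le_of_le_one (by norm_num) (by norm_num) (Nat.sub_ne_zero_of_lt hij)
    exact ⟨(div_pos (hG i) (hG j)).le, by linarith [h.upper_of_lt hβ hij]⟩
  calc ∏ j ∈ Ico (i + 1) (N + 1), |1 - G i / G j|⁻¹
      = ∏ j ∈ Ico (i + 1) (N + 1), (1 - G i / G j)⁻¹ :=
        prod_congr rfl fun j hj => by rw [abs_of_nonneg (by linarith [hbound j hj])]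
    _ ≤ exp (4 * ∑ j ∈ Ico (i + 1) (N + 1), G i / G j) := prod_inv_one_sub_le_exp_sum _ _ hbound
    _ ≤ exp 6 := by
      have hsum : ∑ j ∈ Ico (i + 1) (N + 1), G i / G j ≤
          3 / 2 * ∑ j ∈ Ico (i + 1) (N + 1), (1 / 2 : ℝ) ^ (j - i) := by
        rw [mul_sum]
        exact sum_le_sum fun j hj => h.upper_of_lt hβ (by simp only [mem_Ico] at hj; omega)
      rw [exp_le_exp]
      linarith [sum_Ico_half_pow_sub_le_one i N]

theorem div_mul_prod_lower_le_psiWeight (h : PowerRatioBounds β G) (hβ : 1 < β) (i : ℕ) :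
    G i / G 0 * ∏ j ∈ range i, |1 - G i / G j|⁻¹ ≤ psiWeight (2 ^ β) i := by
  calc G i / G 0 * ∏ j ∈ range i, |1 - G i / G j|⁻¹
      ≤ 3 / 2 * ((2:ℝ) ^ β) ^ i * ∏ d ∈ range i, (1 / 2 * ((2:ℝ) ^ β) ^ (d + 1) - 1)⁻¹ :=
        mul_le_mul (by simpa using h.upper i.zero_le) (h.prod_lower_le hβ i)
          (prod_nonneg fun j _ => by positivity) (by positivity)
    _ = psiWeight (2 ^ β) i := by
      simp only [psiWeight, div_eq_mul_inv, prod_mul_distrib, prod_const, card_range]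
      ring

theorem abs_term_le (h : PowerRatioBounds β G) (hβ : 1 < β) (hG : ∀ i, 0 < G i)
    {i N : ℕ} (hi : i ≤ N) {t : ℝ} (ht : 0 ≤ t) :
    |G i / G 0 * (∏ j ∈ (range (N + 1)).erase i, (1 - G i / G j)⁻¹) * exp (-(G i * t / 4))|
      ≤ psiWeight (2 ^ β) i * exp 6 * exp (-(G 0 * t / 4)) := by
  have hdisj : Disjoint (range i) (Ico (i + 1) (N + 1)) := by
    rw [disjoint_left]
    intro j hj hj'
    simp only [mem_range, mem_Ico] at hj hj'
    omega
  have hw := psiWeight_nonneg (two_lt_two_rpow hβ) i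
  have hexp : exp (-(G i * t / 4)) ≤ exp (-(G 0 * t / 4)) := by
    have := mul_le_mul_of_nonneg_right (h.monotone hβ hG i.zero_le) ht
    rw [exp_le_exp]
    linarith
  rw [range_succ_erase hi, prod_union hdisj, abs_mul, abs_mul, abs_mul, abs_prod, abs_prod,
    abs_of_pos (div_pos (hG i) (hG 0)), abs_exp, ← mul_assoc]
  simp only [abs_inv]
  exact mul_le_mul (mul_le_mul (h.div_mul_prod_lower_le_psiWeight hβ i)
    (h.prod_upper_le hβ.le hG i N) (by positivity) hw) hexp (exp_nonneg _) (by positivity)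

theorem abs_psiSum_le (h : PowerRatioBounds β G) (hβ : 1 < β) (hG : ∀ i, 0 < G i) (N : ℕ)
    {t : ℝ} (ht : 0 ≤ t) :
    |psiSum G N t| ≤ (∑' m, psiWeight (2 ^ β) m) * exp 6 * exp (-(G 0 * t / 4)) := by
  have ha := two_lt_two_rpow hβ
  calc |psiSum G N t|
      ≤ ∑ i ∈ range (N + 1), psiWeight (2 ^ β) i * exp 6 * exp (-(G 0 * t / 4)) :=
        (abs_sum_le_sum_abs _ _).trans <| sum_le_sum fun i hi =>
          h.abs_term_le hβ hG (Nat.lt_succ_iff.1 (mem_range.1 hi)) ht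
    _ = (∑ i ∈ range (N + 1), psiWeight (2 ^ β) i) * exp 6 * exp (-(G 0 * t / 4)) := by
      rw [← sum_mul, ← sum_mul]
    _ ≤ (∑' m, psiWeight (2 ^ β) m) * exp 6 * exp (-(G 0 * t / 4)) := by
      gcongr
      exact (summable_psiWeight ha).sum_le_tsum _ fun m _ => psiWeight_nonneg ha m

end PowerRatioBounds

theorem Psi_add_natCast (γ : ℝ → ℝ) (l : ℤ) (N : ℕ) (t : ℝ) :
    Psi γ l (l + N) t = psiSum (fun i => γ ((2:ℝ) ^ (l + i))) N t := by
  let e : ℕ ↪ ℤ := Nat.castEmbedding.trans (addLeftEmbedding l)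
  have he : (range (N + 1)).map e = Icc l (l + N) := by
    ext k
    simp only [Finset.mem_map, mem_range, mem_Icc, e, Function.Embedding.trans_apply,
      Nat.castEmbedding_apply, addLeftEmbedding_apply]
    constructor
    · rintro ⟨i, hi, rfl⟩
      omega
    · intro hk
      exact ⟨(k - l).toNat, by omega, by omega⟩
  rw [Psi, if_pos (by omega), psiSum, ← he, sum_map]
  refine sum_congr rfl fun i _ => ?_
  rw [← map_erase, prod_map]
  simp [e]

namespace GammaHyp

variable {β : ℝ} {γ : ℝ → ℝ} {n₀ : ℕ}

theorem pos_shift (h : GammaHyp β γ n₀) (l : ℤ) (i : ℕ) : 0 < γ ((2:ℝ) ^ (l + i)) :=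
  h.1 _ (zpow_pos two_pos _)

theorem powerRatioBounds_shift (h : GammaHyp β γ n₀) {l : ℤ} (hl : (n₀:ℤ) ≤ l) :
    PowerRatioBounds β fun i => γ ((2:ℝ) ^ (l + i)) := by
  intro i j
  simpa only [Int.cast_add, Int.cast_natCast, add_sub_add_left_eq_sub] using
    h.2.2 (l + i) (l + j) (by omega) (by omega)

end GammaHyp

/-- There is `c₁ > 0` depending only on `β` with
`|Ψ_n^{(ℓ)}(t)| ≤ c₁ e^{−γ(2^ℓ)t/4}` for all `n ≥ ℓ ≥ n₀` and `t > 0`. -/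
theorem stmt13 (β : ℝ) (hβ : β ∈ Set.Ioo (1:ℝ) 2) :
    ∃ c₁ > (0:ℝ), ∀ (γ : ℝ → ℝ) (n₀ : ℕ), GammaHyp β γ n₀ →
      ∀ l n : ℤ, (n₀:ℤ) ≤ l → l ≤ n → ∀ t : ℝ, 0 < t →
        |Psi γ l n t| ≤ c₁ * Real.exp (-(γ ((2:ℝ) ^ l) * t / 4)) := by
  refine ⟨(∑' m, psiWeight (2 ^ β) m) * exp 6,
    mul_pos (tsum_psiWeight_pos (two_lt_two_rpow hβ.1)) (exp_pos 6), ?_⟩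
  intro γ n₀ hγ l n hl hln t ht
  obtain ⟨N, rfl⟩ : ∃ N : ℕ, n = l + N := ⟨(n - l).toNat, by omega⟩
  rw [Psi_add_natCast]
  simpa using (hγ.powerRatioBounds_shift hl).abs_psiSum_le hβ.1 (hγ.pos_shift l) N ht.le
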